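/- arXiv:2511.22835 — 5 statements merged into one kernel-verified Lean document; each statement's English description precedes it below -/
import Mathlib

section
/- Let u₁ be a smooth, compactly supported radial function on ℝ⁵ and let u(r,t) = (1/(4r³)) ∫_{r−t}^{r+t} s (r² + s² − t²) u₁(s) ds for r > t > 0 be the free wave with data (0, u₁). Then r² ∂_t u(r,t) = (1/2)[(r+t)² u₁(r+t) + (r−t)² u₁(r−t)] − (t/(2r)) ∫_{r−t}^{r+t} s u₁(s) ds, and consequently for each fixed s > 0, lim_{t→+∞} (t+s)² ∂_t u(t+s, t) = (1/2) s² u₁(s) − (1/2) ∫_s^∞ r u₁(r) dr. -/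
open Filter Set MeasureTheory

/-- derivative of `t ↦ ∫_{r-t}^{r+t} g` for continuous `g`. -/
lemma hasDerivAt_int (g : ℝ → ℝ) (hg : Continuous g) (r t : ℝ) :
    HasDerivAt (fun t => ∫ x in (r - t)..(r + t), g x) (g (r + t) + g (r - t)) t := by
  have key : ∀ t : ℝ, ∫ x in (r - t)..(r + t), g x
      = (∫ x in (0:ℝ)..(r + t), g x) - ∫ x in (0:ℝ)..(r - t), g x := by
    intro t
    rw [intervalIntegral.integral_interval_sub_left (hg.intervalIntegrable _ _)
      (hg.intervalIntegrable _ _)]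
  have h1 : HasDerivAt (fun t : ℝ => ∫ x in (0:ℝ)..(r + t), g x) (g (r + t)) t := by
    have := (hg.integral_hasStrictDerivAt 0 (r + t)).hasDerivAt
    have hc : HasDerivAt (fun t : ℝ => r + t) 1 t := by
      simpa using (hasDerivAt_id t).const_add r
    have := this.comp t hc
    simp only [mul_one] at this
    exact this
  have h2 : HasDerivAt (fun t : ℝ => ∫ x in (0:ℝ)..(r - t), g x) (-(g (r - t))) t := by
    have := (hg.integral_hasStrictDerivAt 0 (r - t)).hasDerivAt
    have hc : HasDerivAt (fun t : ℝ => r - t) (-1) t := by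
      simpa using (hasDerivAt_id t).const_sub r
    have := this.comp t hc
    simp only [mul_neg, mul_one] at this
    exact this
  have := h1.sub h2
  simp only [key, sub_neg_eq_add] at this ⊢
  exact this

/-- for smooth compactly supported radial `u₁` on `ℝ⁵` and the free wave
`u(r,t) = (1/(4r³)) ∫_{r-t}^{r+t} s(r²+s²−t²) u₁(s) ds` (valid for `r > t > 0`), one has
`r² ∂_t u(r,t) = ½[(r+t)²u₁(r+t) + (r−t)²u₁(r−t)] − (t/(2r)) ∫_{r-t}^{r+t} s u₁(s) ds`,
and consequently `lim_{t→∞} (t+s)² ∂_t u(t+s,t) = ½ s² u₁(s) − ½ ∫_s^∞ r u₁(r) dr`. -/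
theorem stmt7 (u₁ : ℝ → ℝ) (h1 : ContDiff ℝ (⊤ : ℕ∞) u₁) (h2 : HasCompactSupport u₁)
    (u : ℝ → ℝ → ℝ)
    (hu : ∀ r t : ℝ, 0 < t → t < r →
      u r t = (∫ s in (r - t)..(r + t), s * (r^2 + s^2 - t^2) * u₁ s) / (4 * r^3)) :
    (∀ r t : ℝ, 0 < t → t < r →
      r^2 * deriv (u r) t
        = (1/2) * ((r+t)^2 * u₁ (r+t) + (r-t)^2 * u₁ (r-t))
          - (t/(2*r)) * ∫ s in (r - t)..(r + t), s * u₁ s) ∧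
    ∀ s : ℝ, 0 < s →
      Tendsto (fun t => (t+s)^2 * deriv (u (t+s)) t) atTop
        (nhds ((1/2) * s^2 * u₁ s - (1/2) * ∫ r in Set.Ioi s, r * u₁ r)) := by
  have hu₁c : Continuous u₁ := h1.continuous
  -- Part 1
  have part1 : ∀ r t : ℝ, 0 < t → t < r →
      r^2 * deriv (u r) t
        = (1/2) * ((r+t)^2 * u₁ (r+t) + (r-t)^2 * u₁ (r-t))
          - (t/(2*r)) * ∫ s in (r - t)..(r + t), s * u₁ s := by
    intro r t ht htr
    have hr : (0:ℝ) < r := ht.trans htr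
    set g : ℝ → ℝ := fun s => s * (r^2 + s^2) * u₁ s with hg_def
    set h : ℝ → ℝ := fun s => s * u₁ s with hh_def
    have hgc : Continuous g := by fun_prop
    have hhc : Continuous h := by fun_prop
    -- the formula function
    set F : ℝ → ℝ := fun t =>
      ((∫ x in (r - t)..(r + t), g x) - t^2 * ∫ x in (r - t)..(r + t), h x) / (4 * r^3)
      with hF_def
    have hFeq : ∀ t : ℝ,
        (∫ s in (r - t)..(r + t), s * (r^2 + s^2 - t^2) * u₁ s) / (4 * r^3) = F t := by
      intro t
      have : (∫ s in (r - t)..(r + t), s * (r^2 + s^2 - t^2) * u₁ s)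
          = (∫ x in (r - t)..(r + t), g x) - t^2 * ∫ x in (r - t)..(r + t), h x := by
        rw [← intervalIntegral.integral_const_mul, ← intervalIntegral.integral_sub
          (hgc.intervalIntegrable _ _) ((show Continuous (fun x => t^2 * h x) from continuous_const.mul hhc).intervalIntegrable _ _)]
        apply intervalIntegral.integral_congr
        intro x _
        simp only [hg_def, hh_def]
        ring
      rw [this]
    -- u r agrees with F near t
    have hev : u r =ᶠ[nhds t] F := by
      have hopen : IsOpen {x : ℝ | 0 < x ∧ x < r} := by
        have : {x : ℝ | 0 < x ∧ x < r} = Ioo 0 r := rfl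
        rw [this]; exact isOpen_Ioo
      filter_upwards [hopen.mem_nhds ⟨ht, htr⟩] with x hx
      rw [hu r x hx.1 hx.2, hFeq]
    -- derivative of F
    have hG : HasDerivAt (fun t => ∫ x in (r - t)..(r + t), g x)
        (g (r + t) + g (r - t)) t := hasDerivAt_int g hgc r t
    have hH : HasDerivAt (fun t => ∫ x in (r - t)..(r + t), h x)
        (h (r + t) + h (r - t)) t := hasDerivAt_int h hhc r t
    have ht2 : HasDerivAt (fun t : ℝ => t^2) (2 * t) t := by
      simpa using (hasDerivAt_pow 2 t)
    have hF' : HasDerivAt F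
        ((g (r + t) + g (r - t) - (2 * t * (∫ x in (r - t)..(r + t), h x)
          + t^2 * (h (r + t) + h (r - t)))) / (4 * r^3)) t := by
      exact (hG.sub (ht2.mul hH)).div_const _
    have hderiv : deriv (u r) t
        = (g (r + t) + g (r - t) - (2 * t * (∫ x in (r - t)..(r + t), h x)
          + t^2 * (h (r + t) + h (r - t)))) / (4 * r^3) := by
      rw [hev.deriv_eq]; exact hF'.deriv
    rw [hderiv]
    simp only [hg_def, hh_def]
    have hrne : r ≠ 0 := ne_of_gt hr
    field_simp
    ring
  refine ⟨part1, ?_⟩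
  -- Part 2
  intro s hs
  obtain ⟨R, hR⟩ := h2.isBounded.subset_closedBall 0
  have hzero : ∀ x : ℝ, R < |x| → u₁ x = 0 := by
    intro x hx
    apply image_eq_zero_of_notMem_tsupport
    intro hmem
    have := hR hmem
    simp only [Metric.mem_closedBall, Real.dist_eq, sub_zero] at this
    linarith
  set C : ℝ := ∫ r in Set.Ioi s, r * u₁ r with hC_def
  have hfc : Continuous (fun x : ℝ => x * u₁ x) := by fun_prop
  -- eventual equality
  have heq : ∀ᶠ t in atTop, (t+s)^2 * deriv (u (t+s)) t
      = (1/2) * s^2 * u₁ s - (t / (2 * (t+s))) * C := by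
    filter_upwards [eventually_gt_atTop (max R 1)] with t htR
    have ht1 : (1:ℝ) < t := lt_of_le_of_lt (le_max_right _ _) htR
    have htpos : (0:ℝ) < t := by linarith
    have htR' : R < t := lt_of_le_of_lt (le_max_left _ _) htR
    have h1' := part1 (t + s) t htpos (by linarith)
    have e1 : t + s + t = 2*t + s := by ring
    have e2 : t + s - t = s := by ring
    rw [e1, e2] at h1'
    have hz : u₁ (2*t + s) = 0 := by
      apply hzero
      rw [abs_of_pos (by linarith)]
      linarith
    have hint : (∫ x in s..(2*t + s), x * u₁ x) = C := by
      rw [intervalIntegral.integral_of_le (by linarith), hC_def]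
      rw [setIntegral_eq_of_subset_of_forall_diff_eq_zero measurableSet_Ioi
        Ioc_subset_Ioi_self]
      intro x hx
      simp only [mem_diff, mem_Ioi, mem_Ioc, not_and, not_le] at hx
      have : 2*t + s < x := hx.2 hx.1
      rw [hzero x (by rw [abs_of_pos (by linarith)]; linarith), mul_zero]
    rw [h1', hz, hint]
    ring
  -- the limit of the RHS
  have hlim : Tendsto (fun t : ℝ => t / (2 * (t + s))) atTop (nhds (1/2)) := by
    have h0 : Tendsto (fun t : ℝ => s / (t + s)) atTop (nhds 0) :=
      Tendsto.div_atTop tendsto_const_nhds (tendsto_atTop_add_const_right _ s tendsto_id)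
    have h1'' : Tendsto (fun t : ℝ => t / (t + s)) atTop (nhds 1) := by
      have := tendsto_const_nhds (x := (1:ℝ)) (f := atTop) |>.sub h0
      rw [sub_zero] at this
      refine this.congr' ?_
      filter_upwards [eventually_gt_atTop (0:ℝ)] with t ht
      have hts : t + s ≠ 0 := by positivity
      field_simp
      ring
    have := h1''.const_mul (1/2 : ℝ)
    rw [mul_one] at this
    refine this.congr ?_
    intro t
    rw [mul_comm (2:ℝ) (t+s), div_mul_eq_div_div]
    ring
  have hmain : Tendsto (fun t : ℝ => (1/2) * s^2 * u₁ s - (t / (2 * (t+s))) * C) atTop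
      (nhds ((1/2) * s^2 * u₁ s - (1/2) * C)) :=
    tendsto_const_nhds.sub (hlim.mul_const C)
  exact hmain.congr' (heq.mono fun _ h => h.symm)
end

section
/- Let c ∈ (0,1] and let φ_c solve (1−y²)φ'' − yφ' + (9/4)φ − |φ|^{4/3}φ = 0 with φ_c(0)=0, φ_c'(0)=c, and let φ_* solve the linear equation (1−y²)φ'' − yφ' + (9/4)φ = 0 with φ_*(0)=0, φ_*'(0)=1. Suppose φ_c > 0 on (0, y₀) for some y₀ ∈ (0,1]. Then φ_c(y) > c·φ_*(y) > 0 for all y ∈ (0, y₀). -/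
open Set

/-!
Write `L_ω φ = (1 - y²) φ'' - y φ' + ω² φ` (Chebyshev's operator), so that `φ_*` solves
`L_{3/2} φ = 0` and `φ_c` solves `L_{3/2} φ = |φ|^{4/3} φ`. Abel's identity for this operator reads
`(√(1 - y²) W(f, g))' = (L_ω f · g - L_ω g · f) / √(1 - y²)`.

In the variable `θ = arcsin y` the operator `L_ω` becomes `d²/dθ² + ω²`, so
`φ_* = (2/3) sin ((3/2) arcsin y)`, which is positive on `(0, 1)`. For the pair `(φ_c, φ_*)` the
right-hand side of Abel's identity is `|φ_c|^{4/3} φ_c φ_* / √(1 - y²) > 0` on `(0, y₀)` and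
`W(0) = 0`, so `W > 0` there, i.e. `φ_c / φ_*` is increasing; its limit at `0⁺` is
`φ_c'(0) / φ_*'(0) = c`.
-/

open Real Filter Topology

noncomputable def chebyshevOp (ω : ℝ) (f : ℝ → ℝ) (y : ℝ) : ℝ :=
  (1 - y ^ 2) * deriv (deriv f) y - y * deriv f y + ω ^ 2 * f y

noncomputable def wronskian (f g : ℝ → ℝ) (y : ℝ) : ℝ :=
  deriv f y * g y - deriv g y * f y

lemma one_sub_sq_pos {y : ℝ} (hy : y ∈ Ioo (-1 : ℝ) 1) : 0 < 1 - y ^ 2 := by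
  nlinarith [hy.1, hy.2]

lemma sqrt_one_sub_sq_pos {y : ℝ} (hy : y ∈ Ioo (-1 : ℝ) 1) : 0 < √(1 - y ^ 2) :=
  Real.sqrt_pos.2 (one_sub_sq_pos hy)

lemma sq_sqrt_one_sub_sq {y : ℝ} (hy : y ∈ Ioo (-1 : ℝ) 1) : √(1 - y ^ 2) ^ 2 = 1 - y ^ 2 :=
  Real.sq_sqrt (one_sub_sq_pos hy).le

lemma hasDerivAt_sqrt_one_sub_sq {y : ℝ} (hy : y ∈ Ioo (-1 : ℝ) 1) :
    HasDerivAt (fun x => √(1 - x ^ 2)) (-y / √(1 - y ^ 2)) y := by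
  have h := ((hasDerivAt_pow 2 y).const_sub 1).sqrt (one_sub_sq_pos hy).ne'
  convert h using 1
  field_simp [(sqrt_one_sub_sq_pos hy).ne']
  ring

lemma hasDerivAt_sin_mul_arcsin (ω : ℝ) {y : ℝ} (hy : y ∈ Ioo (-1 : ℝ) 1) :
    HasDerivAt (fun x => sin (ω * arcsin x)) (ω * cos (ω * arcsin y) / √(1 - y ^ 2)) y := by
  convert ((hasDerivAt_arcsin hy.1.ne' hy.2.ne).const_mul ω).sin using 1
  ring

lemma hasDerivAt_cos_mul_arcsin (ω : ℝ) {y : ℝ} (hy : y ∈ Ioo (-1 : ℝ) 1) :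
    HasDerivAt (fun x => cos (ω * arcsin x)) (-(ω * sin (ω * arcsin y) / √(1 - y ^ 2))) y := by
  convert ((hasDerivAt_arcsin hy.1.ne' hy.2.ne).const_mul ω).cos using 1
  ring

lemma eq_of_hasDerivAt_zero {F : ℝ → ℝ} (hF : ∀ x ∈ Ioo (-1 : ℝ) 1, HasDerivAt F 0 x)
    {y : ℝ} (hy : y ∈ Ioo (-1 : ℝ) 1) : F y = F 0 :=
  isOpen_Ioo.is_const_of_deriv_eq_zero isPreconnected_Ioo
    (fun x hx => (hF x hx).differentiableAt.differentiableWithinAt)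
    (fun x hx => (hF x hx).deriv) hy (by norm_num)

lemma ContDiffOn.hasDerivAt_deriv_and_deriv_deriv {f : ℝ → ℝ} {s : Set ℝ} (hs : IsOpen s)
    (hf : ContDiffOn ℝ 2 f s) {y : ℝ} (hy : y ∈ s) :
    HasDerivAt f (deriv f y) y ∧ HasDerivAt (deriv f) (deriv (deriv f) y) y := by
  have hf' : ContDiffOn ℝ 1 (deriv f) s := hf.deriv_of_isOpen hs (by norm_num)
  exact ⟨((hf.differentiableOn (by norm_num)).differentiableAt (hs.mem_nhds hy)).hasDerivAt,
    ((hf'.differentiableOn (by norm_num)).differentiableAt (hs.mem_nhds hy)).hasDerivAt⟩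

section Chebyshev

variable {f g : ℝ → ℝ}

lemma hasDerivAt_sqrt_mul_wronskian (ω : ℝ) (hf : ContDiffOn ℝ 2 f (Ioo (-1) 1))
    (hg : ContDiffOn ℝ 2 g (Ioo (-1) 1)) {y : ℝ} (hy : y ∈ Ioo (-1 : ℝ) 1) :
    HasDerivAt (fun x => √(1 - x ^ 2) * wronskian f g x)
      ((chebyshevOp ω f y * g y - chebyshevOp ω g y * f y) / √(1 - y ^ 2)) y := by
  obtain ⟨hf1, hf2⟩ := hf.hasDerivAt_deriv_and_deriv_deriv isOpen_Ioo hy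
  obtain ⟨hg1, hg2⟩ := hg.hasDerivAt_deriv_and_deriv_deriv isOpen_Ioo hy
  refine ((hasDerivAt_sqrt_one_sub_sq hy).mul ((hf2.mul hg1).sub (hg2.mul hf1))).congr_deriv ?_
  have hq := (sqrt_one_sub_sq_pos hy).ne'
  simp only [Pi.mul_apply, Pi.sub_apply, chebyshevOp]
  field_simp
  rw [sq_sqrt_one_sub_sq hy]
  ring

/- `√(1 - y²)` times the Wronskians of `f` with the solutions `sin (ω arcsin y)` and
`cos (ω arcsin y)` of `L_ω φ = 0`. -/
lemma hasDerivAt_sqrt_mul_deriv_mul_sin_sub {ω : ℝ} (hf : ContDiffOn ℝ 2 f (Ioo (-1) 1)) {y : ℝ}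
    (hy : y ∈ Ioo (-1 : ℝ) 1) (hL : chebyshevOp ω f y = 0) :
    HasDerivAt (fun x => √(1 - x ^ 2) * deriv f x * sin (ω * arcsin x)
      - ω * cos (ω * arcsin x) * f x) 0 y := by
  obtain ⟨hf1, hf2⟩ := hf.hasDerivAt_deriv_and_deriv_deriv isOpen_Ioo hy
  refine ((((hasDerivAt_sqrt_one_sub_sq hy).mul hf2).mul (hasDerivAt_sin_mul_arcsin ω hy)).sub
    (((hasDerivAt_cos_mul_arcsin ω hy).const_mul ω).mul hf1)).congr_deriv ?_
  have hq := (sqrt_one_sub_sq_pos hy).ne'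
  rw [chebyshevOp] at hL
  simp only [Pi.mul_apply]
  field_simp
  linear_combination (sin (ω * arcsin y)) * hL
    + (sin (ω * arcsin y) * deriv (deriv f) y) * sq_sqrt_one_sub_sq hy

lemma hasDerivAt_sqrt_mul_deriv_mul_cos_add {ω : ℝ} (hf : ContDiffOn ℝ 2 f (Ioo (-1) 1)) {y : ℝ}
    (hy : y ∈ Ioo (-1 : ℝ) 1) (hL : chebyshevOp ω f y = 0) :
    HasDerivAt (fun x => √(1 - x ^ 2) * deriv f x * cos (ω * arcsin x)
      + ω * sin (ω * arcsin x) * f x) 0 y := by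
  obtain ⟨hf1, hf2⟩ := hf.hasDerivAt_deriv_and_deriv_deriv isOpen_Ioo hy
  refine ((((hasDerivAt_sqrt_one_sub_sq hy).mul hf2).mul (hasDerivAt_cos_mul_arcsin ω hy)).add
    (((hasDerivAt_sin_mul_arcsin ω hy).const_mul ω).mul hf1)).congr_deriv ?_
  have hq := (sqrt_one_sub_sq_pos hy).ne'
  rw [chebyshevOp] at hL
  simp only [Pi.mul_apply]
  field_simp
  linear_combination (cos (ω * arcsin y)) * hL
    + (cos (ω * arcsin y) * deriv (deriv f) y) * sq_sqrt_one_sub_sq hy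

lemma mul_eq_of_chebyshevOp_eq_zero {ω : ℝ} (hf : ContDiffOn ℝ 2 f (Ioo (-1) 1))
    (hL : ∀ x ∈ Ioo (-1 : ℝ) 1, chebyshevOp ω f x = 0) {y : ℝ} (hy : y ∈ Ioo (-1 : ℝ) 1) :
    ω * f y = ω * f 0 * cos (ω * arcsin y) + deriv f 0 * sin (ω * arcsin y) := by
  have hsin := eq_of_hasDerivAt_zero
    (fun x hx => hasDerivAt_sqrt_mul_deriv_mul_sin_sub hf hx (hL x hx)) hy
  have hcos := eq_of_hasDerivAt_zero
    (fun x hx => hasDerivAt_sqrt_mul_deriv_mul_cos_add hf hx (hL x hx)) hy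
  simp at hsin hcos
  linear_combination sin (ω * arcsin y) * hcos - cos (ω * arcsin y) * hsin
    - ω * f y * sin_sq_add_cos_sq (ω * arcsin y)

lemma pos_of_chebyshevOp_eq_zero {ω : ℝ} (hω : 0 < ω) (hω2 : ω ≤ 2)
    (hf : ContDiffOn ℝ 2 f (Ioo (-1) 1))
    (hL : ∀ x ∈ Ioo (-1 : ℝ) 1, chebyshevOp ω f x = 0) (h0 : f 0 = 0) (h0' : 0 < deriv f 0)
    {y : ℝ} (hy : y ∈ Ioo (0 : ℝ) 1) : 0 < f y := by
  have hsol := mul_eq_of_chebyshevOp_eq_zero hf hL ⟨by linarith [hy.1], hy.2⟩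
  have harcsin_pos : 0 < arcsin y := arcsin_pos.2 hy.1
  have harcsin_lt : arcsin y < π / 2 := (arcsin_lt_pi_div_two).2 hy.2
  have hsin : 0 < sin (ω * arcsin y) := sin_pos_of_pos_of_lt_pi (by positivity) (by nlinarith)
  rw [h0, mul_zero, zero_mul, zero_add] at hsol
  exact pos_of_mul_pos_right (hsol ▸ mul_pos h0' hsin) hω.le

lemma wronskian_pos_of_chebyshevOp_mul_sub_pos (ω : ℝ) (hf : ContDiffOn ℝ 2 f (Ioo (-1) 1))
    (hg : ContDiffOn ℝ 2 g (Ioo (-1) 1)) (h0 : wronskian f g 0 = 0) {b : ℝ} (hb : b ≤ 1)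
    (hL : ∀ x ∈ Ioo 0 b, 0 < chebyshevOp ω f x * g x - chebyshevOp ω g x * f x)
    {y : ℝ} (hy : y ∈ Ioo 0 b) : 0 < wronskian f g y := by
  have hsub : Ico 0 b ⊆ Ioo (-1 : ℝ) 1 := fun x hx => ⟨by linarith [hx.1], by linarith [hx.2]⟩
  have hderiv x (hx : x ∈ Ico 0 b) := hasDerivAt_sqrt_mul_wronskian ω hf hg (hsub hx)
  have hmono : StrictMonoOn (fun x => √(1 - x ^ 2) * wronskian f g x) (Ico 0 b) := by
    refine strictMonoOn_of_deriv_pos (convex_Ico 0 b)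
      (fun x hx => (hderiv x hx).continuousAt.continuousWithinAt) fun x hx => ?_
    rw [interior_Ico] at hx
    rw [(hderiv x (Ioo_subset_Ico_self hx)).deriv]
    exact div_pos (hL x hx) (sqrt_one_sub_sq_pos (hsub (Ioo_subset_Ico_self hx)))
  have h := hmono (left_mem_Ico.2 (hy.1.trans hy.2)) (Ioo_subset_Ico_self hy) hy.1
  beta_reduce at h
  rw [h0, mul_zero] at h
  exact pos_of_mul_pos_right h (sqrt_nonneg _)

lemma strictMonoOn_div_of_wronskian_pos {a b : ℝ}
    (hf : ∀ x ∈ Ioo a b, DifferentiableAt ℝ f x) (hg : ∀ x ∈ Ioo a b, DifferentiableAt ℝ g x)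
    (hg_pos : ∀ x ∈ Ioo a b, 0 < g x) (hW : ∀ x ∈ Ioo a b, 0 < wronskian f g x) :
    StrictMonoOn (fun x => f x / g x) (Ioo a b) := by
  have hderiv x (hx : x ∈ Ioo a b) : HasDerivAt (fun x => f x / g x)
      (wronskian f g x / g x ^ 2) x := by
    refine ((hf x hx).hasDerivAt.div (hg x hx).hasDerivAt (hg_pos x hx).ne').congr_deriv ?_
    rw [wronskian]
    ring
  refine strictMonoOn_of_deriv_pos (convex_Ioo a b)
    (fun x hx => (hderiv x hx).continuousAt.continuousWithinAt) fun x hx => ?_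
  rw [interior_Ioo] at hx
  rw [(hderiv x hx).deriv]
  exact div_pos (hW x hx) (pow_pos (hg_pos x hx) 2)

end Chebyshev

lemma tendsto_div_of_hasDerivAt {f g : ℝ → ℝ} {a b x : ℝ} (hf : HasDerivAt f a x)
    (hg : HasDerivAt g b x) (hf0 : f x = 0) (hg0 : g x = 0) (hb : b ≠ 0) :
    Tendsto (fun y => f y / g y) (𝓝[≠] x) (𝓝 (a / b)) := by
  refine ((hasDerivAt_iff_tendsto_slope.1 hf).div (hasDerivAt_iff_tendsto_slope.1 hg) hb).congr'
    ?_
  filter_upwards [self_mem_nhdsWithin] with y hy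
  have hy' : y - x ≠ 0 := sub_ne_zero.2 hy
  simp only [Pi.div_apply, slope_def_field, hf0, hg0, sub_zero]
  exact div_div_div_cancel_right₀ hy' _ _

lemma StrictMonoOn.lt_of_tendsto_nhdsGT {R : ℝ → ℝ} {a b c : ℝ} (hR : StrictMonoOn R (Ioo a b))
    (hc : Tendsto R (𝓝[>] a) (𝓝 c)) {y : ℝ} (hy : y ∈ Ioo a b) : c < R y := by
  have hm : (a + y) / 2 ∈ Ioo a b := ⟨by linarith [hy.1], by linarith [hy.1, hy.2]⟩
  have hle : c ≤ R ((a + y) / 2) := by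
    refine le_of_tendsto hc ?_
    filter_upwards [Ioo_mem_nhdsGT hm.1] with z hz
    exact (hR ⟨hz.1, hz.2.trans hm.2⟩ hm hz.2).le
  exact hle.trans_lt (hR hm hy (by linarith [hy.1]))

theorem stmt12_general (c : ℝ) (hc : 0 < c)
    (φc φs : ℝ → ℝ)
    (hφc : ContDiffOn ℝ 2 φc (Set.Ioo (-1) 1))
    (hφs : ContDiffOn ℝ 2 φs (Set.Ioo (-1) 1))
    (hodec : ∀ y ∈ Set.Ioo (-1:ℝ) 1,
      (1 - y^2) * deriv (deriv φc) y - y * deriv φc y + (9/4) * φc y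
        - |φc y| ^ ((4:ℝ)/3) * φc y = 0)
    (hodes : ∀ y ∈ Set.Ioo (-1:ℝ) 1,
      (1 - y^2) * deriv (deriv φs) y - y * deriv φs y + (9/4) * φs y = 0)
    (h0c : φc 0 = 0) (h0c' : deriv φc 0 = c)
    (h0s : φs 0 = 0) (h0s' : deriv φs 0 = 1)
    (y₀ : ℝ) (hy₀1 : y₀ ≤ 1)
    (hpos : ∀ y ∈ Set.Ioo 0 y₀, 0 < φc y) :
    ∀ y ∈ Set.Ioo 0 y₀, c * φs y < φc y ∧ 0 < c * φs y := by
  have hLc : ∀ y ∈ Ioo (-1 : ℝ) 1, chebyshevOp (3 / 2) φc y = |φc y| ^ ((4 : ℝ) / 3) * φc y :=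
    fun y hy => by rw [chebyshevOp]; linear_combination hodec y hy
  have hLs : ∀ y ∈ Ioo (-1 : ℝ) 1, chebyshevOp (3 / 2) φs y = 0 :=
    fun y hy => by rw [chebyshevOp]; linear_combination hodes y hy
  have hsub : Ioo 0 y₀ ⊆ Ioo (-1 : ℝ) 1 := fun x hx => ⟨by linarith [hx.1], hx.2.trans_le hy₀1⟩
  have hdiff {f : ℝ → ℝ} (hf : ContDiffOn ℝ 2 f (Ioo (-1) 1)) {x : ℝ} (hx : x ∈ Ioo (-1 : ℝ) 1) :=
    (hf.hasDerivAt_deriv_and_deriv_deriv isOpen_Ioo hx).1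
  have hs_pos : ∀ x ∈ Ioo 0 y₀, 0 < φs x := fun x hx =>
    pos_of_chebyshevOp_eq_zero (by norm_num) (by norm_num) hφs hLs h0s (by rw [h0s']; exact one_pos)
      ⟨hx.1, hx.2.trans_le hy₀1⟩
  have hforce : ∀ x ∈ Ioo 0 y₀,
      0 < chebyshevOp (3 / 2) φc x * φs x - chebyshevOp (3 / 2) φs x * φc x := fun x hx => by
    rw [hLc x (hsub hx), hLs x (hsub hx), zero_mul, sub_zero]
    have := hpos x hx
    have := hs_pos x hx
    positivity
  have hW : ∀ x ∈ Ioo 0 y₀, 0 < wronskian φc φs x := fun x hx =>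
    wronskian_pos_of_chebyshevOp_mul_sub_pos (3 / 2) hφc hφs (by simp [wronskian, h0c, h0s]) hy₀1
      hforce hx
  have hmono := strictMonoOn_div_of_wronskian_pos
    (fun x hx => (hdiff hφc (hsub hx)).differentiableAt)
    (fun x hx => (hdiff hφs (hsub hx)).differentiableAt) hs_pos hW
  have hlim : Tendsto (fun x => φc x / φs x) (𝓝[>] 0) (𝓝 c) := by
    have h := tendsto_div_of_hasDerivAt (hdiff hφc (by norm_num)) (hdiff hφs (by norm_num)) h0c h0s
      (by rw [h0s']; exact one_ne_zero)
    rw [h0c', h0s', div_one] at h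
    exact h.mono_left (nhdsGT_le_nhdsNE 0)
  intro y hy
  have hratio := hmono.lt_of_tendsto_nhdsGT hlim hy
  exact ⟨(lt_div_iff₀ (hs_pos y hy)).1 hratio, mul_pos hc (hs_pos y hy)⟩

/-- Wronskian comparison for the self-similar ODE: if `φ_c` solves the
nonlinear equation with `φ_c(0)=0`, `φ_c'(0)=c ∈ (0,1]`, `φ_*` solves the linear
equation with `φ_*(0)=0`, `φ_*'(0)=1`, and `φ_c > 0` on `(0,y₀)` for some
`y₀ ∈ (0,1]`, then `φ_c(y) > c φ_*(y) > 0` on `(0,y₀)`. -/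
theorem stmt12 (c : ℝ) (hc : 0 < c) (hc1 : c ≤ 1)
    (φc φs : ℝ → ℝ)
    (hφc : ContDiffOn ℝ 2 φc (Set.Ioo (-1) 1))
    (hφs : ContDiffOn ℝ 2 φs (Set.Ioo (-1) 1))
    (hodec : ∀ y ∈ Set.Ioo (-1:ℝ) 1,
      (1 - y^2) * deriv (deriv φc) y - y * deriv φc y + (9/4) * φc y
        - |φc y| ^ ((4:ℝ)/3) * φc y = 0)
    (hodes : ∀ y ∈ Set.Ioo (-1:ℝ) 1,
      (1 - y^2) * deriv (deriv φs) y - y * deriv φs y + (9/4) * φs y = 0)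
    (h0c : φc 0 = 0) (h0c' : deriv φc 0 = c)
    (h0s : φs 0 = 0) (h0s' : deriv φs 0 = 1)
    (y₀ : ℝ) (hy₀ : 0 < y₀) (hy₀1 : y₀ ≤ 1)
    (hpos : ∀ y ∈ Set.Ioo 0 y₀, 0 < φc y) :
    ∀ y ∈ Set.Ioo 0 y₀, c * φs y < φc y ∧ 0 < c * φs y :=
  stmt12_general c hc φc φs hφc hφs hodec hodes h0c h0c' h0s h0s' y₀ hy₀1 hpos
end

section
/- Let u ∈ C¹ be a radial solution of the wave equation u_{tt} − u_{rr} − (4/r)u_r = |u|^{4/3}u on a region containing {(r,t): R₁ ≤ r, |t| ≤ r − R₁}, and define I(r) = ∫_{−r+R₁}^{r−R₁} [ (1/2)|u_r(r,t)|² + (1/2)|u_t(r,t)|² + (3/10)|u(r,t)|^{10/3} ] dt for r > R₁. Then I'(r) ≥ −(8/r) I(r) for r > R₁; consequently, by a backward Gronwall inequality, I(r) ≤ (r/R')^{−8} I(R') for all R₁ < r < R'. -/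
/-!
Differentiating `I` under the integral sign and at the moving endpoints `t = ±(r - R₁)`
(Leibniz rule) gives `I' = ∫ ∂ᵣe dt + e(r, r - R₁) + e(r, R₁ - r)` for the energy density `e`.
The wave equation and the symmetry of second derivatives turn `∂ᵣe` into
`∂ₜ(uᵣ uₜ) - (4/r) uᵣ²`, so the endpoint contributions become
`e ± uᵣ uₜ = (uᵣ ± uₜ)²/2 + (3/10)|u|^(10/3) ≥ 0`, while `∫ uᵣ² dt ≤ 2 I`.
Hence `I' ≥ -(8/r) I`, i.e. `r ↦ r⁸ I(r)` is nondecreasing.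
-/

open Set Filter Topology intervalIntegral Asymptotics

section Leibniz

variable {E : Type*} [NormedAddCommGroup E] [NormedSpace ℝ E]

theorem hasDerivAt_intervalIntegral_of_continuous {F F' : ℝ → ℝ → E}
    (hF : Continuous (Function.uncurry F)) (hF' : Continuous (Function.uncurry F'))
    (hFF' : ∀ r t, HasDerivAt (F · t) (F' r t) r) (a b r₀ : ℝ) :
    HasDerivAt (fun r => ∫ t in a..b, F r t) (∫ t in a..b, F' r₀ t) r₀ := by
  obtain ⟨M, hM⟩ := (isCompact_Icc.prod isCompact_uIcc).exists_bound_of_continuousOn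
    (hF'.continuousOn (s := Icc (r₀ - 1) (r₀ + 1) ×ˢ uIcc a b))
  refine (hasDerivAt_integral_of_dominated_loc_of_deriv_le (bound := fun _ => M)
    (Metric.ball_mem_nhds r₀ one_pos)
    (.of_forall fun r => (hF.uncurry_left r).aestronglyMeasurable)
    ((hF.uncurry_left r₀).intervalIntegrable _ _) (hF'.uncurry_left r₀).aestronglyMeasurable
    (.of_forall fun t ht r hr => hM (r, t) ⟨?_, uIoc_subset_uIcc ht⟩) intervalIntegrable_const
    (.of_forall fun t _ r _ => hFF' r t)).2
  rw [Metric.mem_ball, Real.dist_eq, abs_lt] at hr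
  constructor <;> linarith

theorem hasDerivAt_intervalIntegral_moving_upper [CompleteSpace E] {F : ℝ → ℝ → E}
    (hF : Continuous (Function.uncurry F)) {φ : ℝ → ℝ} {φ' r₀ : ℝ} (hφ : HasDerivAt φ φ' r₀) :
    HasDerivAt (fun r => ∫ t in φ r₀..φ r, F r t) (φ' • F r₀ (φ r₀)) r₀ := by
  have hsmall : (fun r => ∫ t in φ r₀..φ r, (F r t - F r₀ (φ r₀))) =o[𝓝 r₀]
      fun r => φ r - φ r₀ := by
    refine IsLittleO.of_bound fun ε hε => ?_
    obtain ⟨δ, hδ, hclose⟩ :=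
      Metric.continuousAt_iff.1 (hF.continuousAt (x := (r₀, φ r₀))) ε hε
    filter_upwards [Metric.ball_mem_nhds r₀ hδ,
      hφ.continuousAt.tendsto (Metric.ball_mem_nhds (φ r₀) hδ)] with r hr hφr
    refine (norm_integral_le_of_norm_le_const (C := ε) fun t ht => ?_).trans_eq ?_
    · rw [← dist_eq_norm]
      refine (hclose (x := (r, t)) (max_lt hr (lt_of_le_of_lt ?_ hφr))).le
      simpa only [Real.dist_eq] using abs_sub_left_of_mem_uIcc (uIoc_subset_uIcc ht)
    · rw [Real.norm_eq_abs, mul_comm]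
  have hrem : HasDerivAt (fun r => ∫ t in φ r₀..φ r, (F r t - F r₀ (φ r₀))) 0 r₀ := by
    rw [hasDerivAt_iff_isLittleO]
    simpa using hsmall.trans_isBigO hφ.isBigO_sub
  refine (((hφ.sub_const (φ r₀)).smul_const (F r₀ (φ r₀))).add hrem).congr_of_eventuallyEq
    (.of_forall fun r => ?_) |>.congr_deriv (by simp)
  have hi := (hF.uncurry_left r).intervalIntegrable (μ := MeasureTheory.volume) (φ r₀) (φ r)
  simp only [Pi.add_apply, integral_sub hi intervalIntegrable_const, intervalIntegral.integral_const]
  abel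

theorem hasDerivAt_intervalIntegral_leibniz [CompleteSpace E] {F F' : ℝ → ℝ → E}
    (hF : Continuous (Function.uncurry F)) (hF' : Continuous (Function.uncurry F'))
    (hFF' : ∀ r t, HasDerivAt (F · t) (F' r t) r) {a b : ℝ → ℝ} {a' b' r₀ : ℝ}
    (ha : HasDerivAt a a' r₀) (hb : HasDerivAt b b' r₀) :
    HasDerivAt (fun r => ∫ t in a r..b r, F r t)
      ((∫ t in a r₀..b r₀, F' r₀ t) + b' • F r₀ (b r₀) - a' • F r₀ (a r₀)) r₀ := by
  have hsplit : ∀ r, ∫ t in a r..b r, F r t = (∫ t in a r₀..b r₀, F r t)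
      + (∫ t in b r₀..b r, F r t) - ∫ t in a r₀..a r, F r t := fun r => by
    have hi (c d : ℝ) := (hF.uncurry_left r).intervalIntegrable (μ := MeasureTheory.volume) c d
    rw [← integral_interval_sub_left (hi _ _) (hi _ _),
      ← integral_add_adjacent_intervals (hi (a r₀) (b r₀)) (hi _ (b r))]
  exact (((hasDerivAt_intervalIntegral_of_continuous hF hF' hFF' _ _ r₀).add
    (hasDerivAt_intervalIntegral_moving_upper hF hb)).sub
    (hasDerivAt_intervalIntegral_moving_upper hF ha)).congr_of_eventuallyEq (.of_forall hsplit)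

end Leibniz

theorem le_zpow_mul_of_neg_div_mul_le_deriv {f : ℝ → ℝ} {a : ℝ} (ha : 0 ≤ a) (n : ℕ)
    (hf : ∀ x, a < x → DifferentiableAt ℝ f x) (hf' : ∀ x, a < x → -(n / x) * f x ≤ deriv f x)
    {r R : ℝ} (har : a < r) (hrR : r < R) : f r ≤ (r / R) ^ (-n : ℤ) * f R := by
  have hderiv (x : ℝ) (hx : a < x) : HasDerivAt (fun y => y ^ n * f y)
      (x ^ n * (n / x) * f x + x ^ n * deriv f x) x := by
    have hpow : (n : ℝ) * x ^ (n - 1) = x ^ n * (n / x) := by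
      have hx0 : x ≠ 0 := by linarith
      rcases n with _ | n
      · simp
      · field_simp; simp [pow_succ]
    exact ((hasDerivAt_pow n x).fun_mul (hf x hx).hasDerivAt).congr_deriv (by rw [hpow])
  have hmono : MonotoneOn (fun y => y ^ n * f y) (Ioi a) := by
    refine monotoneOn_of_hasDerivWithinAt_nonneg (convex_Ioi a)
      (fun x hx => (hderiv x hx).continuousAt.continuousWithinAt)
      (fun x hx => (hderiv x (by simpa using hx)).hasDerivWithinAt) fun x hx => ?_
    rw [interior_Ioi] at hx
    have := mul_le_mul_of_nonneg_left (hf' x hx) (pow_nonneg (ha.trans hx.le) n)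
    linarith
  have hr : 0 < r := ha.trans_lt har
  have := hmono har (har.trans hrR) hrR.le
  simp only at this
  rw [zpow_neg, zpow_natCast, div_pow, inv_div, div_mul_eq_mul_div, le_div_iff₀ (by positivity)]
  linarith

noncomputable def partialFst {E : Type*} [NormedAddCommGroup E] [NormedSpace ℝ E]
    (f : ℝ × ℝ → E) (p : ℝ × ℝ) : E :=
  fderiv ℝ f p (1, 0)

noncomputable def partialSnd {E : Type*} [NormedAddCommGroup E] [NormedSpace ℝ E]
    (f : ℝ × ℝ → E) (p : ℝ × ℝ) : E :=
  fderiv ℝ f p (0, 1)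

local notation "∂₁" => partialFst
local notation "∂₂" => partialSnd

section Partial

variable {E : Type*} [NormedAddCommGroup E] [NormedSpace ℝ E] {f : ℝ × ℝ → E}

theorem hasDerivAt_partialFst {r t : ℝ} (hf : DifferentiableAt ℝ f (r, t)) :
    HasDerivAt (fun ρ => f (ρ, t)) (∂₁ f (r, t)) r :=
  hf.hasFDerivAt.comp_hasDerivAt r ((hasDerivAt_id r).prodMk (hasDerivAt_const r t))

theorem hasDerivAt_partialSnd {r t : ℝ} (hf : DifferentiableAt ℝ f (r, t)) :
    HasDerivAt (fun s => f (r, s)) (∂₂ f (r, t)) t :=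
  hf.hasFDerivAt.comp_hasDerivAt t ((hasDerivAt_const t r).prodMk (hasDerivAt_id t))

theorem ContDiff.partialFst {m n : WithTop ℕ∞} (hf : ContDiff ℝ n f) (hmn : m + 1 ≤ n) :
    ContDiff ℝ m (∂₁ f) :=
  (hf.fderiv_right hmn).clm_apply contDiff_const

theorem ContDiff.partialSnd {m n : WithTop ℕ∞} (hf : ContDiff ℝ n f) (hmn : m + 1 ≤ n) :
    ContDiff ℝ m (∂₂ f) :=
  (hf.fderiv_right hmn).clm_apply contDiff_const

theorem partialSnd_partialFst (hf : ContDiff ℝ 2 f) (p : ℝ × ℝ) :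
    ∂₂ (∂₁ f) p = ∂₁ (∂₂ f) p := by
  have hdf : Differentiable ℝ (fderiv ℝ f) :=
    (hf.fderiv_right (m := 1) le_rfl).differentiable one_ne_zero
  have happly (v w : ℝ × ℝ) : fderiv ℝ (fun q => fderiv ℝ f q v) p w = fderiv ℝ (fderiv ℝ f) p w v := by
    rw [fderiv_clm_apply (hdf p) (differentiableAt_const v)]
    simp
  change fderiv ℝ (fun q => fderiv ℝ f q (1, 0)) p (0, 1)
    = fderiv ℝ (fun q => fderiv ℝ f q (0, 1)) p (1, 0)
  rw [happly, happly]
  exact (hf.contDiffAt.isSymmSndFDerivAt (by simp)).eq _ _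

theorem deriv_deriv_fst (hf : ContDiff ℝ 2 f) (r t : ℝ) :
    deriv (deriv fun ρ => f (ρ, t)) r = ∂₁ (∂₁ f) (r, t) := by
  rw [funext fun ρ => (hasDerivAt_partialFst (hf.differentiable two_ne_zero (ρ, t))).deriv]
  exact (hasDerivAt_partialFst
    ((hf.partialFst (m := 1) (by norm_num)).differentiable one_ne_zero _)).deriv

theorem deriv_deriv_snd (hf : ContDiff ℝ 2 f) (r t : ℝ) :
    deriv (deriv fun s => f (r, s)) t = ∂₂ (∂₂ f) (r, t) := by
  rw [funext fun s => (hasDerivAt_partialSnd (hf.differentiable two_ne_zero (r, s))).deriv]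
  exact (hasDerivAt_partialSnd
    ((hf.partialSnd (m := 1) (by norm_num)).differentiable one_ne_zero _)).deriv

end Partial

theorem continuous_abs_rpow_sub_two_mul {q : ℝ} (hq : 1 < q) :
    Continuous fun x : ℝ => |x| ^ (q - 2) * x := by
  have hderiv : deriv (fun x : ℝ => ‖x‖ ^ q) = fun x => q * (|x| ^ (q - 2) * x) :=
    funext fun x => by simpa [mul_assoc] using (hasDerivAt_abs_rpow x hq).deriv
  have hcont := (contDiff_norm_rpow (E := ℝ) hq).continuous_deriv le_rfl
  rw [hderiv] at hcont
  convert hcont.const_mul q⁻¹ using 2 with x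
  field_simp

section Energy

variable {q : ℝ} {U : ℝ × ℝ → ℝ}

noncomputable def energyDensity (q : ℝ) (U : ℝ × ℝ → ℝ) (p : ℝ × ℝ) : ℝ :=
  ∂₁ U p ^ 2 / 2 + ∂₂ U p ^ 2 / 2 + |U p| ^ q / q

noncomputable def energyDensityDerivFst (q : ℝ) (U : ℝ × ℝ → ℝ) (p : ℝ × ℝ) : ℝ :=
  ∂₁ U p * ∂₁ (∂₁ U) p + ∂₂ U p * ∂₁ (∂₂ U) p + |U p| ^ (q - 2) * U p * ∂₁ U p

-- With `k = d - 1` this is the radial form of `u_tt - Δu = |u|^(q-2) u` on `ℝᵈ`.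
def SolvesRadialWaveAt (q k : ℝ) (U : ℝ × ℝ → ℝ) (p : ℝ × ℝ) : Prop :=
  ∂₂ (∂₂ U) p - ∂₁ (∂₁ U) p - k / p.1 * ∂₁ U p = |U p| ^ (q - 2) * U p

theorem continuous_energyDensity (hq : 1 < q) (hU : ContDiff ℝ 2 U) :
    Continuous (energyDensity q U) := by
  have h1 := (hU.partialFst (m := 0) (by norm_num)).continuous
  have h2 := (hU.partialSnd (m := 0) (by norm_num)).continuous
  have h0 := hU.continuous
  unfold energyDensity
  fun_prop (disch := linarith)

theorem continuous_energyDensityDerivFst (hq : 1 < q) (hU : ContDiff ℝ 2 U) :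
    Continuous (energyDensityDerivFst q U) := by
  have h1 := (hU.partialFst (m := 0) (by norm_num)).continuous
  have h2 := (hU.partialSnd (m := 0) (by norm_num)).continuous
  have h11 := ((hU.partialFst (m := 1) (by norm_num)).partialFst (m := 0) (by norm_num)).continuous
  have h21 := ((hU.partialSnd (m := 1) (by norm_num)).partialFst (m := 0) (by norm_num)).continuous
  have hN := (continuous_abs_rpow_sub_two_mul hq).comp hU.continuous
  unfold energyDensityDerivFst
  exact ((h1.mul h11).add (h2.mul h21)).add (hN.mul h1)

theorem hasDerivAt_energyDensity_fst (hq : 1 < q) (hU : ContDiff ℝ 2 U) (r t : ℝ) :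
    HasDerivAt (fun ρ => energyDensity q U (ρ, t)) (energyDensityDerivFst q U (r, t)) r := by
  have hd1 := (hU.partialFst (m := 1) (by norm_num)).differentiable one_ne_zero
  have hd2 := (hU.partialSnd (m := 1) (by norm_num)).differentiable one_ne_zero
  have hpot := ((hasDerivAt_abs_rpow (U (r, t)) hq).comp r
    (hasDerivAt_partialFst ((hU.differentiable two_ne_zero) (r, t)))).div_const q
  refine ((((hasDerivAt_partialFst (hd1 _)).pow 2).div_const 2).add
    (((hasDerivAt_partialFst (hd2 _)).pow 2).div_const 2) |>.add hpot).congr_deriv ?_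
  simp only [energyDensityDerivFst]
  field_simp
  ring

theorem SolvesRadialWaveAt.energyDensityDerivFst_eq (hU : ContDiff ℝ 2 U) {k r t : ℝ}
    (h : SolvesRadialWaveAt q k U (r, t)) :
    energyDensityDerivFst q U (r, t) = ∂₂ (∂₁ U) (r, t) * ∂₂ U (r, t)
      + ∂₁ U (r, t) * ∂₂ (∂₂ U) (r, t) - k / r * ∂₁ U (r, t) ^ 2 := by
  dsimp only [SolvesRadialWaveAt] at h
  rw [energyDensityDerivFst, partialSnd_partialFst hU]
  linear_combination (-∂₁ U (r, t)) * h

end Energy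

section ConeEnergy

variable {q : ℝ} {U : ℝ × ℝ → ℝ}

theorem integral_energyDensityDerivFst (hU : ContDiff ℝ 2 U) {k r a b : ℝ}
    (h : ∀ t ∈ uIcc a b, SolvesRadialWaveAt q k U (r, t)) :
    ∫ t in a..b, energyDensityDerivFst q U (r, t) = ∂₁ U (r, b) * ∂₂ U (r, b)
      - ∂₁ U (r, a) * ∂₂ U (r, a) - k / r * ∫ t in a..b, ∂₁ U (r, t) ^ 2 := by
  have hU₁ := hU.partialFst (m := 1) (by norm_num)
  have hU₂ := hU.partialSnd (m := 1) (by norm_num)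
  have hflux : Continuous fun t => ∂₂ (∂₁ U) (r, t) * ∂₂ U (r, t)
      + ∂₁ U (r, t) * ∂₂ (∂₂ U) (r, t) :=
    ((hU₁.partialSnd (m := 0) (by norm_num)).continuous.curry_right.mul
      hU₂.continuous.curry_right).add
    (hU₁.continuous.curry_right.mul (hU₂.partialSnd (m := 0) (by norm_num)).continuous.curry_right)
  have hsq : Continuous fun t => k / r * ∂₁ U (r, t) ^ 2 :=
    continuous_const.mul (hU₁.continuous.curry_right.pow 2)
  rw [integral_congr fun t ht => (h t ht).energyDensityDerivFst_eq hU,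
    integral_sub (hflux.intervalIntegrable _ _) (hsq.intervalIntegrable _ _),
    integral_eq_sub_of_hasDerivAt (fun t _ => (hasDerivAt_partialSnd
      (hU₁.differentiable one_ne_zero _)).fun_mul (hasDerivAt_partialSnd
      (hU₂.differentiable one_ne_zero _))) (hflux.intervalIntegrable _ _),
    integral_const_mul]

noncomputable def coneEnergy (q : ℝ) (U : ℝ × ℝ → ℝ) (R₁ r : ℝ) : ℝ :=
  ∫ t in (-r + R₁)..(r - R₁), energyDensity q U (r, t)

theorem hasDerivAt_coneEnergy (hq : 1 < q) (hU : ContDiff ℝ 2 U) (R₁ r : ℝ) :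
    HasDerivAt (coneEnergy q U R₁) ((∫ t in (-r + R₁)..(r - R₁), energyDensityDerivFst q U (r, t))
      + energyDensity q U (r, r - R₁) + energyDensity q U (r, -r + R₁)) r :=
  (hasDerivAt_intervalIntegral_leibniz (F := fun r t => energyDensity q U (r, t))
    (F' := fun r t => energyDensityDerivFst q U (r, t))
    (continuous_energyDensity hq hU) (continuous_energyDensityDerivFst hq hU)
    (hasDerivAt_energyDensity_fst hq hU) ((hasDerivAt_neg r).add_const R₁)
    ((hasDerivAt_id' r).sub_const R₁)).congr_deriv (by simp)

theorem abs_partialFst_mul_partialSnd_le_energyDensity (hq : 0 < q) (p : ℝ × ℝ) :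
    |∂₁ U p * ∂₂ U p| ≤ energyDensity q U p := by
  have hpot : 0 ≤ |U p| ^ q / q := by positivity
  rw [abs_mul, energyDensity]
  nlinarith [sq_nonneg (|∂₁ U p| - |∂₂ U p|), sq_abs (∂₁ U p), sq_abs (∂₂ U p)]

theorem sq_partialFst_le_energyDensity (hq : 0 < q) (p : ℝ × ℝ) :
    ∂₁ U p ^ 2 ≤ 2 * energyDensity q U p := by
  have hpot : 0 ≤ |U p| ^ q / q := by positivity
  rw [energyDensity]
  nlinarith [sq_nonneg (∂₂ U p)]

theorem neg_mul_coneEnergy_le_deriv (hq : 1 < q) (hU : ContDiff ℝ 2 U) {k R₁ r : ℝ}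
    (hk : 0 ≤ k) (hR₁ : 0 ≤ R₁) (hr : R₁ < r)
    (h : ∀ t ∈ Icc (-r + R₁) (r - R₁), SolvesRadialWaveAt q k U (r, t)) :
    -(2 * k / r) * coneEnergy q U R₁ r ≤ deriv (coneEnergy q U R₁) r := by
  have hab : -r + R₁ ≤ r - R₁ := by linarith
  have hq₀ : 0 < q := by linarith
  rw [(hasDerivAt_coneEnergy hq hU R₁ r).deriv,
    integral_energyDensityDerivFst hU (by rwa [uIcc_of_le hab])]
  have hsq : ∫ t in (-r + R₁)..(r - R₁), ∂₁ U (r, t) ^ 2 ≤ 2 * coneEnergy q U R₁ r := by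
    rw [coneEnergy, ← integral_const_mul]
    exact integral_mono_on hab
      (((hU.partialFst (m := 0) (by norm_num)).continuous.curry_right.pow 2).intervalIntegrable _ _)
      ((continuous_const.mul (continuous_energyDensity hq hU).curry_right).intervalIntegrable _ _)
      fun t _ => sq_partialFst_le_energyDensity hq₀ _
  have hb := abs_le.1 (abs_partialFst_mul_partialSnd_le_energyDensity hq₀ (U := U) (r, r - R₁))
  have ha := abs_le.1 (abs_partialFst_mul_partialSnd_le_energyDensity hq₀ (U := U) (r, -r + R₁))
  have hkr : 0 ≤ k / r := div_nonneg hk (by linarith)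
  have := mul_le_mul_of_nonneg_left hsq hkr
  rw [show 2 * k / r = 2 * (k / r) by ring]
  linarith

end ConeEnergy

/-- for a radial `C²` solution of
`u_{tt} − u_{rr} − (4/r)u_r = |u|^{4/3}u` on a region containing
`{(r,t) : R₁ ≤ r, |t| ≤ r − R₁}`, the characteristic energy
`I(r) = ∫_{-r+R₁}^{r-R₁} (½u_r² + ½u_t² + (3/10)|u|^{10/3}) dt` satisfies
`I'(r) ≥ −(8/r) I(r)`, and hence (backward Gronwall)
`I(r) ≤ (r/R')^{-8} I(R')` for `R₁ < r < R'`. -/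
theorem stmt13 (R₁ : ℝ) (hR₁ : 0 < R₁) (u : ℝ → ℝ → ℝ)
    (hreg : ContDiff ℝ 2 fun p : ℝ × ℝ => u p.1 p.2)
    (heq : ∀ r t : ℝ, R₁ ≤ r → |t| ≤ r - R₁ →
      deriv (deriv (u r)) t - deriv (deriv (fun ρ => u ρ t)) r
        - (4/r) * deriv (fun ρ => u ρ t) r = |u r t| ^ ((4:ℝ)/3) * u r t)
    (I : ℝ → ℝ)
    (hI : ∀ r, I r = ∫ t in (-r + R₁)..(r - R₁),
      ((deriv (fun ρ => u ρ t) r)^2/2 + (deriv (u r) t)^2/2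
        + (3/10) * |u r t| ^ ((10:ℝ)/3))) :
    (∀ r : ℝ, R₁ < r → -(8/r) * I r ≤ deriv I r) ∧
    ∀ r R' : ℝ, R₁ < r → r < R' → I r ≤ (r/R') ^ (-8 : ℤ) * I R' := by
  set U : ℝ × ℝ → ℝ := fun p => u p.1 p.2
  have hU : ContDiff ℝ 2 U := hreg
  have hdr (r t : ℝ) : deriv (fun ρ => u ρ t) r = ∂₁ U (r, t) :=
    (hasDerivAt_partialFst (hU.differentiable two_ne_zero _)).deriv
  have hdt (r t : ℝ) : deriv (u r) t = ∂₂ U (r, t) :=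
    (hasDerivAt_partialSnd (hU.differentiable two_ne_zero _)).deriv
  have hdrr (r t : ℝ) : deriv (deriv (fun ρ => u ρ t)) r = ∂₁ (∂₁ U) (r, t) :=
    deriv_deriv_fst hU r t
  have hdtt (r t : ℝ) : deriv (deriv (u r)) t = ∂₂ (∂₂ U) (r, t) := deriv_deriv_snd hU r t
  have hIU : I = coneEnergy (10 / 3) U R₁ := funext fun r => by
    rw [hI, coneEnergy]
    congr 1 with t
    rw [hdr, hdt, energyDensity]
    ring
  have hwave (r : ℝ) (hr : R₁ < r) (t : ℝ) (ht : t ∈ Icc (-r + R₁) (r - R₁)) :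
      SolvesRadialWaveAt (10 / 3) 4 U (r, t) := by
    have := heq r t hr.le (abs_le.2 ⟨by linarith [ht.1], ht.2⟩)
    rw [hdrr, hdtt, hdr] at this
    rw [SolvesRadialWaveAt, show (10 : ℝ) / 3 - 2 = 4 / 3 by norm_num]
    exact this
  have hderiv (r : ℝ) (hr : R₁ < r) : -(8 / r) * I r ≤ deriv I r := by
    rw [hIU]
    convert neg_mul_coneEnergy_le_deriv (by norm_num) hU (by norm_num) hR₁.le hr (hwave r hr)
      using 2
    ring
  refine ⟨hderiv, fun r R' hr hrR' => le_zpow_mul_of_neg_div_mul_le_deriv hR₁.le 8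
    (fun x _ => ?_) (by exact_mod_cast hderiv) hr hrR'⟩
  rw [hIU]
  exact (hasDerivAt_coneEnergy (by norm_num) hU R₁ x).differentiableAt
end

section
/- Let λ > 0, γ ∈ (0, 1/10], and let J ∈ C²([t₁* − γλ, t₁* + γλ]) be nonnegative with J''(t)·J(t) ≥ (5/4)|J'(t)|² on this interval. Suppose M > 0 and γ₁ ∈ (0, γλ/5] are such that J''(t) ≥ M for all t ∈ [t₁* − γ₁, t₁* + γ₁]. Then J(t) ≥ γ₁² M / 8 for all t ∈ [t₁* − γ₁/2, t₁* + γ₁/2]. -/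
/-!
Suppose `J t < M δ² / 2` with `δ = γ₁ / 2` and, up to the reflection `t ↦ -t`, `t ≤ t₁`.
Taylor's formula on `[t, t + δ]` with `J'' ≥ M` gives `J s < δ J' s` at `s = t + δ`, so
`J' s > 0`. The virial inequality says exactly that `J ^ (-1/4)` is concave where `J > 0`, so
`J ^ (-1/4)` stays below its tangent at `s`, which vanishes at `s + 4 J s / J' s < s + 4δ`.
A continuity argument keeps `J` positive (indeed `J ≥ J s`) on `[s, s + 4δ]`, which is impossible.
-/

open Set

theorem ConvexOn.add_mul_sub_le_of_hasDerivAt {S : Set ℝ} {f : ℝ → ℝ} {f' x y : ℝ}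
    (hf : ConvexOn ℝ S f) (hx : x ∈ S) (hy : y ∈ S) (hd : HasDerivAt f f' x) :
    f x + f' * (y - x) ≤ f y := by
  rcases lt_trichotomy x y with hxy | rfl | hxy
  · have := hf.le_slope_of_hasDerivAt hx hy hxy hd
    rw [slope_def_field, le_div_iff₀ (sub_pos.2 hxy)] at this
    linarith
  · simp
  · have := hf.slope_le_of_hasDerivAt hy hx hxy hd
    rw [slope_def_field, div_le_iff₀ (sub_pos.2 hxy)] at this
    linarith

theorem ConcaveOn.le_add_mul_sub_of_hasDerivAt {S : Set ℝ} {f : ℝ → ℝ} {f' x y : ℝ}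
    (hf : ConcaveOn ℝ S f) (hx : x ∈ S) (hy : y ∈ S) (hd : HasDerivAt f f' x) :
    f y ≤ f x + f' * (y - x) := by
  have := (neg_convexOn_iff.2 hf).add_mul_sub_le_of_hasDerivAt hx hy hd.neg
  simp only [Pi.neg_apply] at this
  linarith

theorem convexOn_Icc_of_hasDerivAt2_nonneg {f f' f'' : ℝ → ℝ} {a b : ℝ}
    (hd : ∀ u ∈ Icc a b, HasDerivAt f (f' u) u) (hd' : ∀ u ∈ Icc a b, HasDerivAt f' (f'' u) u)
    (h0 : ∀ u ∈ Icc a b, 0 ≤ f'' u) : ConvexOn ℝ (Icc a b) f := by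
  refine convexOn_of_hasDerivWithinAt2_nonneg (f' := f') (convex_Icc a b)
    (fun u hu => (hd u hu).continuousAt.continuousWithinAt) (fun u hu => ?_) (fun u hu => ?_)
    (fun u hu => h0 u (interior_subset hu))
  · exact (hd u (interior_subset hu)).hasDerivWithinAt
  · exact (hd' u (interior_subset hu)).hasDerivWithinAt

theorem add_mul_sub_add_sq_le_of_le_deriv2 {f f' f'' : ℝ → ℝ} {a b M x y : ℝ}
    (hd : ∀ u ∈ Icc a b, HasDerivAt f (f' u) u) (hd' : ∀ u ∈ Icc a b, HasDerivAt f' (f'' u) u)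
    (hM : ∀ u ∈ Icc a b, M ≤ f'' u) (hx : x ∈ Icc a b) (hy : y ∈ Icc a b) :
    f x + f' x * (y - x) + M * (y - x) ^ 2 / 2 ≤ f y := by
  have hq : ∀ u, HasDerivAt (fun u => M * (u - x) ^ 2 / 2) (M * (u - x)) u := fun u =>
    ((((hasDerivAt_id' u).sub_const x).pow 2).const_mul M |>.div_const 2).congr_deriv (by ring)
  have hl : ∀ u, HasDerivAt (fun u => M * (u - x)) M u := fun u => by
    simpa using ((hasDerivAt_id' u).sub_const x).const_mul M
  have hconv : ConvexOn ℝ (Icc a b) (fun u => f u - M * (u - x) ^ 2 / 2) :=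
    convexOn_Icc_of_hasDerivAt2_nonneg (fun u hu => (hd u hu).sub (hq u))
      (fun u hu => (hd' u hu).sub (hl u)) (fun u hu => sub_nonneg.2 (hM u hu))
  have := hconv.add_mul_sub_le_of_hasDerivAt hx hy ((hd x hx).sub (hq x))
  simp only [sub_self, mul_zero, zero_pow two_ne_zero, zero_div, sub_zero] at this
  linarith

theorem ContinuousOn.pos_of_bootstrap {f : ℝ → ℝ} {a b : ℝ} (hf : ContinuousOn f (Icc a b))
    (ha : 0 < f a) (hle : ∀ v ∈ Icc a b, (∀ x ∈ Icc a v, 0 < f x) → f a ≤ f v) :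
    ∀ x ∈ Icc a b, 0 < f x := by
  by_contra! h
  obtain ⟨x₁, hx₁, hfx₁⟩ := h
  set Z := Icc a b ∩ f ⁻¹' Iic 0
  have hZ : IsClosed Z := hf.preimage_isClosed_of_isClosed isClosed_Icc isClosed_Iic
  have hZbdd : BddBelow Z := bddBelow_Icc.mono inter_subset_left
  have hu : sInf Z ∈ Z := hZ.csInf_mem ⟨x₁, hx₁, hfx₁⟩ hZbdd
  have hfu : f (sInf Z) ≤ 0 := hu.2
  have hau : a < sInf Z := hu.1.1.lt_of_ne fun h => by rw [← h] at hfu; linarith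
  have hpos : ∀ x ∈ Ico a (sInf Z), 0 < f x := fun x hx => not_le.1 fun hfx =>
    hx.2.not_ge (csInf_le hZbdd ⟨⟨hx.1, hx.2.le.trans hu.1.2⟩, hfx⟩)
  have hcl : closure (Ico a (sInf Z)) = Icc a (sInf Z) := closure_Ico hau.ne
  have : f a ≤ f (sInf Z) :=
    le_on_closure (fun v hv => hle v ⟨hv.1, hv.2.le.trans hu.1.2⟩
        fun x hx => hpos x ⟨hx.1, hx.2.trans_lt hv.2⟩)
      continuousOn_const (hcl ▸ hf.mono (Icc_subset_Icc_right hu.1.2))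
      (hcl ▸ right_mem_Icc.2 hau.le)
  linarith

def IsVirialOn (J J' J'' : ℝ → ℝ) (S : Set ℝ) : Prop :=
  ∀ t ∈ S, HasDerivAt J (J' t) t ∧ HasDerivAt J' (J'' t) t ∧ (5 / 4) * J' t ^ 2 ≤ J'' t * J t

namespace IsVirialOn

variable {J J' J'' : ℝ → ℝ} {a b : ℝ}

theorem mono {S T : Set ℝ} (h : IsVirialOn J J' J'' T) (hST : S ⊆ T) : IsVirialOn J J' J'' S :=
  fun t ht => h t (hST ht)

theorem comp_neg (h : IsVirialOn J J' J'' (Icc a b)) :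
    IsVirialOn (fun t => J (-t)) (fun t => -J' (-t)) (fun t => J'' (-t)) (Icc (-b) (-a)) := by
  intro t ht
  obtain ⟨hd, hd', hvir⟩ := h (-t) (neg_mem_Icc_iff.2 ht)
  refine ⟨(hd.comp t (hasDerivAt_neg t)).congr_deriv (by ring),
    ((hd'.comp t (hasDerivAt_neg t)).neg).congr_deriv (by ring), by simpa using hvir⟩

/-- `J ^ (-1/4)` is concave: its second derivative is `-(1/4) J ^ (-9/4) (J'' J - (5/4) J'^2)`. -/
theorem concaveOn_rpow (h : IsVirialOn J J' J'' (Icc a b)) (hpos : ∀ t ∈ Icc a b, 0 < J t) :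
    ConcaveOn ℝ (Icc a b) (fun t => J t ^ (-(1/4) : ℝ)) := by
  set e : ℝ := -(1/4)
  refine neg_convexOn_iff.1 (convexOn_Icc_of_hasDerivAt2_nonneg
    (f' := fun t => -(J' t * e * J t ^ (e - 1)))
    (f'' := fun t => -(J'' t * e * J t ^ (e - 1) + J' t * e * (J' t * (e - 1) * J t ^ (e - 1 - 1))))
    (fun t ht => ((h t ht).1.rpow_const (Or.inl (hpos t ht).ne')).neg)
    (fun t ht => (((h t ht).2.1.mul_const e).mul
      ((h t ht).1.rpow_const (Or.inl (hpos t ht).ne'))).neg)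
    fun t ht => ?_)
  obtain ⟨-, -, hvir⟩ := h t ht
  have hJ := hpos t ht
  have hsplit : J t ^ (e - 1) = J t ^ (e - 1 - 1) * J t := by
    rw [Real.rpow_sub_one hJ.ne' (e - 1)]
    field_simp
  calc (0 : ℝ) ≤ 1 / 4 * J t ^ (e - 1 - 1) * (J'' t * J t - 5 / 4 * J' t ^ 2) :=
        mul_nonneg (by positivity) (sub_nonneg.2 hvir)
    _ = _ := by rw [hsplit]; ring

theorem rpow_le (h : IsVirialOn J J' J'' (Icc a b)) (hpos : ∀ t ∈ Icc a b, 0 < J t)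
    {x y : ℝ} (hx : x ∈ Icc a b) (hy : y ∈ Icc a b) :
    J y ^ (-(1/4) : ℝ) ≤ J x ^ (-(1/4) : ℝ) * (1 - J' x * (y - x) / (4 * J x)) := by
  have hJx := hpos x hx
  have := (h.concaveOn_rpow hpos).le_add_mul_sub_of_hasDerivAt hx hy
    ((h x hx).1.rpow_const (Or.inl hJx.ne'))
  rw [Real.rpow_sub_one hJx.ne'] at this
  convert this using 1
  field_simp
  ring

theorem deriv_mul_lt (h : IsVirialOn J J' J'' (Icc a b)) (hab : a ≤ b) (ha : 0 < J a)
    (ha' : 0 ≤ J' a) : J' a * (b - a) < 4 * J a := by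
  have hpos : ∀ t ∈ Icc a b, 0 < J t := by
    refine ContinuousOn.pos_of_bootstrap
      (fun t ht => (h t ht).1.continuousAt.continuousWithinAt) ha fun v hv hposv => ?_
    have hle := (h.mono (Icc_subset_Icc_right hv.2)).rpow_le hposv (left_mem_Icc.2 hv.1)
      (right_mem_Icc.2 hv.1)
    have : 0 ≤ J' a * (v - a) / (4 * J a) :=
      div_nonneg (mul_nonneg ha' (sub_nonneg.2 hv.1)) (by positivity)
    rw [← Real.rpow_le_rpow_iff_of_neg (hposv v (right_mem_Icc.2 hv.1)) ha
      (by norm_num : (-(1/4) : ℝ) < 0)]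
    nlinarith [Real.rpow_pos_of_pos ha (-(1/4) : ℝ)]
  have hle := h.rpow_le hpos (left_mem_Icc.2 hab) (right_mem_Icc.2 hab)
  have h1 : 0 < 1 - J' a * (b - a) / (4 * J a) :=
    pos_of_mul_pos_right ((Real.rpow_pos_of_pos (hpos b (right_mem_Icc.2 hab)) _).trans_le hle)
      (Real.rpow_pos_of_pos ha _).le
  rw [sub_pos, div_lt_one (by positivity)] at h1
  exact h1

theorem le_of_le_deriv2_right (h : IsVirialOn J J' J'' (Icc a b)) (hnn : ∀ t ∈ Icc a b, 0 ≤ J t)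
    {t δ M : ℝ} (hδ : 0 ≤ δ) (hat : a ≤ t) (htb : t + 5 * δ ≤ b)
    (hM : ∀ u ∈ Icc t (t + δ), M ≤ J'' u) : M * δ ^ 2 / 2 ≤ J t := by
  by_contra! hlt
  set s := t + δ
  have hs : s ∈ Icc a b := ⟨by linarith, by linarith⟩
  have hts : Icc t s ⊆ Icc a b := Icc_subset_Icc hat hs.2
  have htaylor := add_mul_sub_add_sq_le_of_le_deriv2 (fun u hu => (h u (hts hu)).1)
    (fun u hu => (h u (hts hu)).2.1) hM (right_mem_Icc.2 (le_add_of_nonneg_right hδ))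
    (left_mem_Icc.2 (le_add_of_nonneg_right hδ))
  have hJs := hnn s hs
  have hJ's : 0 < J' s := by nlinarith
  have hJs_pos : 0 < J s := by
    refine hJs.lt_of_ne fun h0 => ?_
    have := (h s hs).2.2
    rw [← h0, mul_zero] at this
    nlinarith
  have := (h.mono (Icc_subset_Icc hs.1 (show s + 4 * δ ≤ b by linarith))).deriv_mul_lt
    (by linarith) hJs_pos hJ's.le
  nlinarith

theorem le_of_le_deriv2_left (h : IsVirialOn J J' J'' (Icc a b)) (hnn : ∀ t ∈ Icc a b, 0 ≤ J t)
    {t δ M : ℝ} (hδ : 0 ≤ δ) (hat : a ≤ t - 5 * δ) (htb : t ≤ b)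
    (hM : ∀ u ∈ Icc (t - δ) t, M ≤ J'' u) : M * δ ^ 2 / 2 ≤ J t := by
  simpa using h.comp_neg.le_of_le_deriv2_right (t := -t)
    (fun u hu => hnn (-u) (neg_mem_Icc_iff.2 hu)) hδ (by linarith) (by linarith)
    fun u hu => hM (-u) ⟨by linarith [hu.2], by linarith [hu.1]⟩

end IsVirialOn

theorem stmt14_general (lam γ t₁ M γ₁ : ℝ) (J J' J'' : ℝ → ℝ)
    (hdJ : ∀ t ∈ Set.Icc (t₁ - γ*lam) (t₁ + γ*lam), HasDerivAt J (J' t) t)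
    (hdJ' : ∀ t ∈ Set.Icc (t₁ - γ*lam) (t₁ + γ*lam), HasDerivAt J' (J'' t) t)
    (hJnn : ∀ t ∈ Set.Icc (t₁ - γ*lam) (t₁ + γ*lam), 0 ≤ J t)
    (hvir : ∀ t ∈ Set.Icc (t₁ - γ*lam) (t₁ + γ*lam), (5/4) * (J' t)^2 ≤ J'' t * J t)
    (hγ₁' : γ₁ ≤ γ*lam/5)
    (hlow : ∀ t ∈ Set.Icc (t₁ - γ₁) (t₁ + γ₁), M ≤ J'' t) :
    ∀ t ∈ Set.Icc (t₁ - γ₁/2) (t₁ + γ₁/2), γ₁^2 * M / 8 ≤ J t := by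
  intro t ht
  have h : IsVirialOn J J' J'' (Icc (t₁ - γ*lam) (t₁ + γ*lam)) :=
    fun u hu => ⟨hdJ u hu, hdJ' u hu, hvir u hu⟩
  have hδ : 0 ≤ γ₁ / 2 := by linarith [ht.1, ht.2]
  have hbound : M * (γ₁ / 2) ^ 2 / 2 ≤ J t := by
    rcases le_total t t₁ with htt | htt
    · exact h.le_of_le_deriv2_right hJnn hδ (by linarith [ht.1]) (by linarith)
        fun u hu => hlow u ⟨by linarith [ht.1, hu.1], by linarith [hu.2]⟩
    · exact h.le_of_le_deriv2_left hJnn hδ (by linarith) (by linarith [ht.2])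
        fun u hu => hlow u ⟨by linarith [hu.1], by linarith [ht.2, hu.2]⟩
  linarith

/-- abstract virial ODE lemma.  If `J ≥ 0` is `C²` on
`[t₁* − γλ, t₁* + γλ]` with `J''J ≥ (5/4)(J')²` there, and `J'' ≥ M > 0` on
`[t₁* − γ₁, t₁* + γ₁]` with `γ₁ ∈ (0, γλ/5]`, then `J ≥ γ₁²M/8` on
`[t₁* − γ₁/2, t₁* + γ₁/2]`. -/
theorem stmt14 (lam γ t₁ M γ₁ : ℝ) (J J' J'' : ℝ → ℝ)
    (hlam : 0 < lam) (hγ : 0 < γ) (hγ' : γ ≤ 1/10)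
    (hdJ : ∀ t ∈ Set.Icc (t₁ - γ*lam) (t₁ + γ*lam), HasDerivAt J (J' t) t)
    (hdJ' : ∀ t ∈ Set.Icc (t₁ - γ*lam) (t₁ + γ*lam), HasDerivAt J' (J'' t) t)
    (hJnn : ∀ t ∈ Set.Icc (t₁ - γ*lam) (t₁ + γ*lam), 0 ≤ J t)
    (hvir : ∀ t ∈ Set.Icc (t₁ - γ*lam) (t₁ + γ*lam), (5/4) * (J' t)^2 ≤ J'' t * J t)
    (hM : 0 < M) (hγ₁ : 0 < γ₁) (hγ₁' : γ₁ ≤ γ*lam/5)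
    (hlow : ∀ t ∈ Set.Icc (t₁ - γ₁) (t₁ + γ₁), M ≤ J'' t) :
    ∀ t ∈ Set.Icc (t₁ - γ₁/2) (t₁ + γ₁/2), γ₁^2 * M / 8 ≤ J t :=
  stmt14_general lam γ t₁ M γ₁ J J' J'' hdJ hdJ' hJnn hvir hγ₁' hlow
end

section
/- Let G ∈ L²(ℝ), δ > 0, ℓ > 1, and suppose ‖G‖_{L²(−ℓt, −ℓ^{−1}t)} ≥ δ for all t in an interval [b, a] with ℓ R ≤ b < a. Then δ² ⌊log_{ℓ²}(a/b)⌋ ≤ ∫_{−a}^{−b} |G(s)|² ds. In particular, if ∫_{−a}^{−b}|G(s)|² ds ≤ C, then a/b ≤ ℓ^{2(C/δ² + 1)}. -/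
/-! For `t_j = bℓ^{2j+1}` the windows `(−ℓt_j, −t_j/ℓ)` are the consecutive blocks
`(−bℓ^{2j+2}, −bℓ^{2j})` of a geometric subdivision of `(−a, −b]`, so they are disjoint and their
masses, each at least `δ²`, add up to at most the integral over `(−a, −b]`. If `a/b` exceeded
`ℓ^{2(C/δ²+1)}`, then `N = ⌊C/δ²⌋ + 1` such blocks would fit, forcing `N δ² ≤ C`. -/

open Set MeasureTheory
open scoped Function

theorem card_mul_le_setIntegral_of_pairwise_disjoint {X ι : Type*} [MeasurableSpace X]
    {μ : Measure X} {f : X → ℝ} {S : Set X} {s : ι → Set X} {δ : ℝ} (t : Finset ι)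
    (hs : ∀ i ∈ t, MeasurableSet (s i)) (hdisj : (t : Set ι).Pairwise (Disjoint on s))
    (hsub : ∀ i ∈ t, s i ⊆ S) (hf : IntegrableOn f S μ) (hf₀ : 0 ≤ᵐ[μ.restrict S] f)
    (hδ : ∀ i ∈ t, δ ≤ ∫ x in s i, f x ∂μ) :
    t.card * δ ≤ ∫ x in S, f x ∂μ :=
  calc t.card * δ = ∑ _i ∈ t, δ := by rw [Finset.sum_const, nsmul_eq_mul]
    _ ≤ ∑ i ∈ t, ∫ x in s i, f x ∂μ := Finset.sum_le_sum hδ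
    _ = ∫ x in ⋃ i ∈ t, s i, f x ∂μ :=
      (integral_biUnion_finset t hs hdisj fun i hi => hf.mono_set (hsub i hi)).symm
    _ ≤ ∫ x in S, f x ∂μ :=
      setIntegral_mono_set hf hf₀ (iUnion₂_subset hsub).eventuallyLE

section GeometricBlocks

variable {ℓ b : ℝ}

theorem Ioo_neg_mul_neg_div_eq (hℓ : ℓ ≠ 0) (j : ℕ) :
    Ioo (-(ℓ * (b * ℓ ^ (2 * j + 1)))) (-(b * ℓ ^ (2 * j + 1) / ℓ)) =
      Ioo (-(b * ℓ ^ (2 * j + 2))) (-(b * ℓ ^ (2 * j))) := by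
  congr 2
  · ring
  · field_simp; ring

theorem pairwise_disjoint_Ioo_neg_geom (hb : 0 ≤ b) (hℓ : 1 ≤ ℓ) :
    Pairwise (Disjoint on fun j : ℕ => Ioo (-(b * ℓ ^ (2 * j + 2))) (-(b * ℓ ^ (2 * j)))) := by
  have hanti : Antitone fun j : ℕ => -(b * ℓ ^ (2 * j)) := fun i j hij =>
    neg_le_neg <| mul_le_mul_of_nonneg_left (pow_le_pow_right₀ hℓ (by omega)) hb
  simpa only [Order.succ_eq_add_one, mul_add, mul_one] using hanti.pairwise_disjoint_on_Ioo_succ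

theorem mul_pow_le_div_iff (hℓ : 0 < ℓ) {a : ℝ} (n : ℕ) :
    b * ℓ ^ n ≤ a / ℓ ↔ b * ℓ ^ (n + 1) ≤ a := by
  rw [le_div_iff₀ hℓ, pow_succ, mul_assoc]

theorem Ioo_neg_geom_subset_Ioc (hb : 0 ≤ b) (hℓ : 1 ≤ ℓ) {a : ℝ} {j : ℕ}
    (ha : b * ℓ ^ (2 * j + 2) ≤ a) :
    Ioo (-(b * ℓ ^ (2 * j + 2))) (-(b * ℓ ^ (2 * j))) ⊆ Ioc (-a) (-b) := by
  have : b ≤ b * ℓ ^ (2 * j) := le_mul_of_one_le_right hb (one_le_pow₀ hℓ)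
  exact Ioo_subset_Ioc_self.trans (Ioc_subset_Ioc (by linarith) (by linarith))

end GeometricBlocks

theorem nat_mul_le_setIntegral_of_forall_le {f : ℝ → ℝ} {δ ℓ b a : ℝ}
    (hf : IntegrableOn f (Ioc (-a) (-b))) (hf₀ : 0 ≤ f) (hℓ : 1 ≤ ℓ) (hb : 0 ≤ b)
    (hlow : ∀ t ∈ Icc b a, δ ≤ ∫ s in Ioo (-(ℓ * t)) (-(t / ℓ)), f s)
    (N : ℕ) (hN : ∀ j < N, b * ℓ ^ (2 * j + 1) ≤ a / ℓ) :
    N * δ ≤ ∫ s in Ioc (-a) (-b), f s := by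
  have hℓ₀ : 0 < ℓ := zero_lt_one.trans_le hℓ
  have hfit : ∀ j < N, b * ℓ ^ (2 * j + 2) ≤ a := fun j hj =>
    (mul_pow_le_div_iff hℓ₀ _).1 (hN j hj)
  have hmem : ∀ j < N, b * ℓ ^ (2 * j + 1) ∈ Icc b a := fun j hj =>
    ⟨le_mul_of_one_le_right hb (one_le_pow₀ hℓ),
      (mul_le_mul_of_nonneg_left (pow_le_pow_right₀ hℓ (by omega)) hb).trans (hfit j hj)⟩
  simpa using card_mul_le_setIntegral_of_pairwise_disjoint (μ := volume) (Finset.range N)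
    (fun _ _ => measurableSet_Ioo) ((pairwise_disjoint_Ioo_neg_geom hb hℓ).set_pairwise _)
    (fun j hj => Ioo_neg_geom_subset_Ioc hb hℓ (hfit j (Finset.mem_range.1 hj))) hf
    (Filter.Eventually.of_forall hf₀) fun j hj => by
      simpa only [Ioo_neg_mul_neg_div_eq hℓ₀.ne'] using hlow _ (hmem j (Finset.mem_range.1 hj))

theorem div_le_rpow_of_forall_nat_mul_le {δ ℓ b a C : ℝ} (hδ : 0 < δ) (hℓ : 1 ≤ ℓ) (hb : 0 < b)
    (hcount : ∀ N : ℕ, (∀ j < N, b * ℓ ^ (2 * j + 1) ≤ a / ℓ) → N * δ ≤ C) :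
    a / b ≤ ℓ ^ (2 * (C / δ + 1)) := by
  by_contra! hlarge
  set x := C / δ
  -- `N = 0` gives `0 ≤ C`
  have hx : 0 ≤ x := div_nonneg (by simpa using hcount 0 (by simp)) hδ.le
  have hfit : ∀ j < ⌊x⌋₊ + 1, b * ℓ ^ (2 * j + 1) ≤ a / ℓ := by
    intro j hj
    have hjx : (j : ℝ) ≤ x := (Nat.cast_le.2 (Nat.lt_succ_iff.1 hj)).trans (Nat.floor_le hx)
    have hpow : ℓ ^ (2 * j + 2) < a / b := by
      refine lt_of_le_of_lt ?_ hlarge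
      rw [← Real.rpow_natCast]
      exact Real.rpow_le_rpow_of_exponent_le hℓ (by push_cast; linarith)
    rw [mul_pow_le_div_iff (zero_lt_one.trans_le hℓ), ← le_div_iff₀' hb]
    exact hpow.le
  have hNx : ((⌊x⌋₊ + 1 : ℕ) : ℝ) ≤ x := (le_div_iff₀ hδ).2 (hcount _ hfit)
  push_cast at hNx
  linarith [Nat.lt_floor_add_one x]

theorem stmt19_general (G : ℝ → ℝ) (hG : MemLp G 2 volume)
    (δ ℓ R b a : ℝ) (hδ : 0 < δ) (hℓ : 1 < ℓ) (hR : 0 < R)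
    (hb : ℓ * R ≤ b)
    (hlow : ∀ t ∈ Set.Icc b a, δ^2 ≤ ∫ s in Set.Ioo (-(ℓ*t)) (-(t/ℓ)), (G s)^2) :
    (∀ N : ℕ, (∀ j < N, b * ℓ^(2*j+1) ≤ a/ℓ) →
      (N:ℝ) * δ^2 ≤ ∫ s in Set.Ioc (-a) (-b), (G s)^2) ∧
    ∀ C : ℝ, (∫ s in Set.Ioc (-a) (-b), (G s)^2) ≤ C →
      a/b ≤ ℓ ^ (2*(C/δ^2 + 1)) := by
  have hb₀ : 0 < b := (mul_pos (zero_lt_one.trans hℓ) hR).trans_le hb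
  have hcount : ∀ N : ℕ, (∀ j < N, b * ℓ ^ (2 * j + 1) ≤ a / ℓ) →
      (N : ℝ) * δ ^ 2 ≤ ∫ s in Ioc (-a) (-b), G s ^ 2 :=
    nat_mul_le_setIntegral_of_forall_le hG.integrable_sq.integrableOn
      (fun s => sq_nonneg (G s)) hℓ.le hb₀.le hlow
  exact ⟨hcount, fun C hC => div_le_rpow_of_forall_nat_mul_le (pow_pos hδ 2) hℓ.le hb₀
    fun N hN => (hcount N hN).trans hC⟩

/-- pigeonhole bound for the length of a collision period.  If
`G ∈ L²(ℝ)` satisfies `‖G‖²_{L²(−ℓt, −ℓ⁻¹t)} ≥ δ²` for all `t ∈ [b,a]` with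
`ℓR ≤ b < a`, then any `N` indices `j` with `bℓ^{2j+1} ≤ a/ℓ` give
`N δ² ≤ ∫_{−a}^{−b} |G(s)|² ds` (the intervals `(−ℓt_j, −ℓ⁻¹t_j)`, `t_j = bℓ^{2j+1}`,
being disjoint and contained in `(−a,−b)`); in particular if that integral is at most
`C` then `a/b ≤ ℓ^{2(C/δ²+1)}`. -/
theorem stmt19 (G : ℝ → ℝ) (hG : MemLp G 2 volume)
    (δ ℓ R b a : ℝ) (hδ : 0 < δ) (hℓ : 1 < ℓ) (hR : 0 < R)
    (hb : ℓ * R ≤ b) (hba : b < a)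
    (hlow : ∀ t ∈ Set.Icc b a, δ^2 ≤ ∫ s in Set.Ioo (-(ℓ*t)) (-(t/ℓ)), (G s)^2) :
    (∀ N : ℕ, (∀ j < N, b * ℓ^(2*j+1) ≤ a/ℓ) →
      (N:ℝ) * δ^2 ≤ ∫ s in Set.Ioc (-a) (-b), (G s)^2) ∧
    ∀ C : ℝ, (∫ s in Set.Ioc (-a) (-b), (G s)^2) ≤ C →
      a/b ≤ ℓ ^ (2*(C/δ^2 + 1)) :=
  stmt19_general G hG δ ℓ R b a hδ hℓ hR hb hlow
end
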